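/- Zero Cancellation Theorem, part (i): Let n ≥ 1 and let x, y be elements of Kiselman's semigroup K_n with x·y = f. If y belongs to the submonoid of K_n generated by {a_2, a_3, …, a_n}, then x = f. -/

import Mathlib

namespace Kiselman

/-- The defining relations of Kiselman's semigroup on the free monoid over `Fin n`,
where the index `i : Fin n` represents the generator `a_{i+1}` (so letters are 0-based). -/
def Rel (n : ℕ) : FreeMonoid (Fin n) → FreeMonoid (Fin n) → Prop := fun u v =>
  (∃ i : Fin n, u = .of i * .of i ∧ v = .of i) ∨
  (∃ i j : Fin n, j < i ∧
    ((u = .of i * .of j * .of i ∧ v = .of i * .of j) ∨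
     (u = .of j * .of i * .of j ∧ v = .of i * .of j)))

/-- Kiselman's semigroup (monoid) `K n`, presented by the relations `Rel n`. -/
def K (n : ℕ) : Type := (conGen (Rel n)).Quotient

instance (n : ℕ) : Monoid (K n) := inferInstanceAs (Monoid (conGen (Rel n)).Quotient)

/-- The canonical epimorphism `φ` from the free monoid onto `K n`. -/
def phi (n : ℕ) : FreeMonoid (Fin n) →* K n := Con.mk' _

/-- `φ` applied to a word given as a list of (0-based) letters. -/
def phiL (n : ℕ) (w : List (Fin n)) : K n := phi n (FreeMonoid.ofList w)

/-- The generator `a_{i+1}` of `K n` (`i` is the 0-based index). -/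
def gen {n : ℕ} (i : Fin n) : K n := phi n (FreeMonoid.of i)

/-- The word `a_hi a_{hi-1} ⋯ a_lo` (letters named 1-based), as a list of 0-based indices:
`[hi-1, hi-2, …, lo-1]` (capped at `n`). -/
def descList (n lo hi : ℕ) : List (Fin n) :=
  ((List.finRange n).filter (fun k => decide (lo ≤ k.val + 1 ∧ k.val + 1 ≤ hi))).reverse

/-- The zero element `f = a_n a_{n-1} ⋯ a_2 a_1` of `K n`. -/
def fEl (n : ℕ) : K n := phiL n (descList n 1 n)

/-- A word `w` is canonical if for every factorization `w = p ++ [i] ++ u ++ [i] ++ q`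
there are letters `j > i` and `k < i` occurring in `u`. -/
def Canonical {n : ℕ} (w : List (Fin n)) : Prop :=
  ∀ (p u q : List (Fin n)) (i : Fin n),
    w = p ++ [i] ++ u ++ [i] ++ q →
    (∃ j ∈ u, i < j) ∧ (∃ k ∈ u, k < i)

/-- The submonoid of `K n` generated by `{a_2, a_3, …, a_n}`. -/
def upper (n : ℕ) : Submonoid (K n) := Submonoid.closure (gen '' {i : Fin n | i.val ≠ 0})

/-- The submonoid of `K n` generated by `{a_1, a_2, …, a_{n-1}}`. -/
def lower (n : ℕ) : Submonoid (K n) := Submonoid.closure (gen '' {i : Fin n | i.val + 1 ≠ n})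

/-- `m(x) = min { i ∈ {0,…,n} : x ⬝ (a_i a_{i-1} ⋯ a_1) = f }`. -/
noncomputable def mIdx {n : ℕ} (x : K n) : ℕ :=
  sInf {i : ℕ | x * phiL n (descList n 1 i) = fEl n}

section Aux

variable {n : ℕ}

lemma phiL_append (u v : List (Fin n)) : phiL n (u ++ v) = phiL n u * phiL n v := by
  unfold phiL; rw [FreeMonoid.ofList_append, map_mul]

lemma phiL_nil : phiL n [] = 1 := map_one _

lemma phiL_cons (a : Fin n) (u : List (Fin n)) : phiL n (a :: u) = gen a * phiL n u := by
  have : (a :: u) = [a] ++ u := rfl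
  rw [this, phiL_append]; rfl

lemma relK {u v : FreeMonoid (Fin n)} (h : Rel n u v) : phi n u = phi n v :=
  (Con.eq _).2 (ConGen.Rel.of _ _ h)

lemma r1 (i : Fin n) : gen i * gen i = gen i := by
  have := relK (n := n) (Or.inl ⟨i, rfl, rfl⟩)
  rwa [map_mul] at this

lemma r2 {s b : Fin n} (h : s < b) : gen b * gen s * gen b = gen b * gen s := by
  have := relK (n := n) (Or.inr ⟨b, s, h, Or.inl ⟨rfl, rfl⟩⟩)
  simp only [map_mul] at this; exact this

lemma r3 {s b : Fin n} (h : s < b) : gen s * gen b * gen s = gen b * gen s := by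
  have := relK (n := n) (Or.inr ⟨b, s, h, Or.inr ⟨rfl, rfl⟩⟩)
  simp only [map_mul] at this; exact this

lemma L1 (i : Fin n) : ∀ (u : List (Fin n)), (∀ l ∈ u, l.val < i.val) →
    phiL n (i :: (u ++ [i])) = phiL n (i :: u) := by
  intro u
  induction u with
  | nil =>
    intro _
    simp only [List.nil_append, phiL_cons, phiL_nil, mul_one]
    rw [← mul_one (gen i * gen i), mul_assoc] at *
    simp only [mul_one]
    exact r1 i
  | cons j u ih =>
    intro h
    have hj : j < i := Fin.lt_def.2 (h j (List.mem_cons_self))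
    have hu : ∀ l ∈ u, l.val < i.val := fun l hl => h l (List.mem_cons_of_mem _ hl)
    have ih' := ih hu
    simp only [phiL_cons] at ih' ⊢
    calc gen i * (gen j * phiL n (u ++ [i]))
        = (gen i * gen j) * phiL n (u ++ [i]) := by rw [mul_assoc]
      _ = (gen i * gen j * gen i) * phiL n (u ++ [i]) := by rw [r2 hj]
      _ = (gen i * gen j) * (gen i * phiL n (u ++ [i])) := by rw [mul_assoc]
      _ = (gen i * gen j) * (gen i * phiL n u) := by rw [ih']
      _ = (gen i * gen j * gen i) * phiL n u := by rw [← mul_assoc]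
      _ = (gen i * gen j) * phiL n u := by rw [r2 hj]
      _ = gen i * (gen j * phiL n u) := by rw [mul_assoc]

lemma L2 (i : Fin n) (u : List (Fin n)) (h : ∀ l ∈ u, i.val < l.val) :
    phiL n (i :: (u ++ [i])) = phiL n (u ++ [i]) := by
  induction u using List.reverseRecOn with
  | nil =>
    simp only [List.nil_append, phiL_cons, phiL_nil, mul_one]
    exact r1 i
  | append_singleton u j ih =>
    have hj : i < j := Fin.lt_def.2 (h j (by simp))
    have hu : ∀ l ∈ u, i.val < l.val := fun l hl => h l (by simp [hl])
    have ih' := ih hu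
    have e1 : (u ++ [j]) ++ [i] = u ++ [j, i] := by simp
    rw [e1]
    show phiL n ((i :: u) ++ [j, i]) = phiL n (u ++ [j, i])
    rw [phiL_append, phiL_append]
    have eji : phiL n [j, i] = gen j * gen i := by
      simp [phiL_cons, phiL_nil]
    have step1 : phiL n [j, i] = gen i * (gen j * gen i) := by
      rw [eji]; conv_lhs => rw [← r3 hj, mul_assoc]
    calc phiL n (i :: u) * phiL n [j, i]
        = phiL n (i :: u) * (gen i * (gen j * gen i)) := by rw [step1]
      _ = (phiL n (i :: u) * gen i) * (gen j * gen i) := by rw [mul_assoc]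
      _ = phiL n ((i :: u) ++ [i]) * (gen j * gen i) := by
          rw [phiL_append]; simp [phiL_cons, phiL_nil]
      _ = phiL n (i :: (u ++ [i])) * (gen j * gen i) := by simp
      _ = phiL n (u ++ [i]) * (gen j * gen i) := by rw [ih']
      _ = (phiL n u * gen i) * (gen j * gen i) := by
          rw [phiL_append]; simp [phiL_cons, phiL_nil]
      _ = phiL n u * (gen i * gen j * gen i) := by
          rw [mul_assoc, mul_assoc]
      _ = phiL n u * (gen j * gen i) := by rw [r3 hj]
      _ = phiL n u * phiL n [j, i] := by rw [eji]

lemma Dedup (i : Fin n) : ∀ (B : List (Fin n)), (∀ l ∈ B, l.val ≤ i.val) →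
    phiL n (i :: B) = phiL n (i :: B.filter (· ≠ i)) := by
  intro B
  induction B with
  | nil => intro _; rfl
  | cons j B ih =>
    intro h
    have hB : ∀ l ∈ B, l.val ≤ i.val := fun l hl => h l (List.mem_cons_of_mem _ hl)
    have ih' := ih hB
    by_cases hji : j = i
    · subst hji
      have : (j :: B).filter (· ≠ j) = B.filter (· ≠ j) := by simp
      rw [this, ← ih', phiL_cons, phiL_cons, ← mul_assoc, r1]
    · have hj : j < i := Fin.lt_def.2 (lt_of_le_of_ne (h j (List.mem_cons_self))
        (fun hv => hji (Fin.ext hv)))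
      have hfil : (j :: B).filter (· ≠ i) = j :: B.filter (· ≠ i) := by
        simp [List.filter_cons, hji]
      rw [hfil]
      simp only [phiL_cons] at ih' ⊢
      calc gen i * (gen j * phiL n B)
          = (gen i * gen j) * phiL n B := by rw [mul_assoc]
        _ = (gen i * gen j * gen i) * phiL n B := by rw [r2 hj]
        _ = (gen i * gen j) * (gen i * phiL n B) := by rw [mul_assoc]
        _ = (gen i * gen j) * (gen i * phiL n (B.filter (· ≠ i))) := by rw [ih']
        _ = (gen i * gen j * gen i) * phiL n (B.filter (· ≠ i)) := by
            rw [← mul_assoc]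
        _ = (gen i * gen j) * phiL n (B.filter (· ≠ i)) := by rw [r2 hj]
        _ = gen i * (gen j * phiL n (B.filter (· ≠ i))) := by rw [mul_assoc]

def fwd (n : ℕ) : ℕ → List (Fin n)
  | 0 => []
  | k+1 => if h : k < n then ⟨k, h⟩ :: fwd n k else fwd n k

lemma fwd_letters : ∀ k, ∀ l ∈ fwd n k, l.val < k := by
  intro k
  induction k with
  | zero => intro l hl; simp [fwd] at hl
  | succ k ih =>
    intro l hl
    unfold fwd at hl
    split at hl
    · rcases List.mem_cons.1 hl with h | h
      · simp [h]
      · exact Nat.lt_succ_of_lt (ih l h)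
    · exact Nat.lt_succ_of_lt (ih l hl)

lemma fwd_succ_of_lt {k : ℕ} (h : k < n) : fwd n (k+1) = ⟨k, h⟩ :: fwd n k := by
  simp [fwd, h]

lemma fwd_decomp : ∀ k, k ≤ n → ∀ a : Fin n, a.val < k →
    ∃ X, fwd n k = X ++ a :: fwd n a.val ∧ ∀ l ∈ X, a.val < l.val := by
  intro k
  induction k with
  | zero => intro _ a ha; omega
  | succ k ih =>
    intro hk a ha
    have hkn : k < n := hk
    rw [fwd_succ_of_lt hkn]
    by_cases hak : a.val = k
    · refine ⟨[], ?_, by simp⟩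
      have : a = ⟨k, hkn⟩ := Fin.ext hak
      rw [this]; rfl
    · obtain ⟨X, hX, hXl⟩ := ih (le_of_lt hk) a (by omega)
      refine ⟨⟨k, hkn⟩ :: X, by rw [hX]; rfl, ?_⟩
      intro l hl
      rcases List.mem_cons.1 hl with h | h
      · simp [h]; omega
      · exact hXl l h

lemma SLabs {k : ℕ} (hk : k ≤ n) (a : Fin n) (ha : a.val < k) :
    phiL n (a :: fwd n k) = phiL n (fwd n k) := by
  obtain ⟨X, hX, hXl⟩ := fwd_decomp k hk a ha
  have hXa : ∀ l ∈ X, a.val < l.val := hXl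
  rw [hX]
  have e : a :: (X ++ a :: fwd n a.val) = (a :: (X ++ [a])) ++ fwd n a.val := by simp
  have e2 : X ++ a :: fwd n a.val = (X ++ [a]) ++ fwd n a.val := by simp
  rw [e, e2, phiL_append, phiL_append]
  congr 1
  exact L2 a X hXa

lemma Labs : ∀ (A : List (Fin n)) (k : ℕ), k ≤ n → (∀ l ∈ A, l.val < k) →
    phiL n (A ++ fwd n k) = phiL n (fwd n k) := by
  intro A
  induction A with
  | nil => intro k _ _; rfl
  | cons a A ih =>
    intro k hk h
    have : (a :: A) ++ fwd n k = a :: (A ++ fwd n k) := rfl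
    rw [this, phiL_cons, ih k hk (fun l hl => h l (List.mem_cons_of_mem _ hl)),
      ← phiL_cons]
    exact SLabs hk a (h a (List.mem_cons_self))

lemma filter_ne_map (B : List (Fin n)) (c : Fin n) :
    (B.filter (· ≠ c)).map Fin.val = (B.map Fin.val).filter (fun m => m ≠ c.val) := by
  induction B with
  | nil => rfl
  | cons a B ih =>
    by_cases h : a = c
    · subst h
      simp only [List.filter_cons, List.map_cons]
      simp only [decide_not]
      simp
      simpa using ih
    · have hv : a.val ≠ c.val := fun hv => h (Fin.ext hv)
      simp only [List.filter_cons, List.map_cons]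
      simp [h, hv]
      simpa using ih

lemma suff : ∀ k (u : List (Fin n)), (∀ l ∈ u, l.val < k) →
    (List.range k).reverse.Sublist (u.map Fin.val) → phiL n u = phiL n (fwd n k) := by
  intro k
  induction k with
  | zero =>
    intro u hu _
    cases u with
    | nil => rfl
    | cons a u => exact absurd (hu a (List.mem_cons_self)) (by omega)
  | succ k ih =>
    intro u hu hsub
    have hrev : (List.range (k+1)).reverse = k :: (List.range k).reverse := by
      rw [List.range_succ, List.reverse_append]; rfl
    rw [hrev] at hsub
    obtain ⟨r₁, r₂, hsplit, hkmem, hrest⟩ := List.cons_sublist_iff.1 hsub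
    obtain ⟨p, q, hr₁⟩ := List.append_of_mem hkmem
    have hmap : u.map Fin.val = p ++ (k :: (q ++ r₂)) := by
      rw [hsplit, hr₁]; simp
    obtain ⟨A, rest, hu_eq, hA, hrest2⟩ := List.map_eq_append_iff.1 hmap
    obtain ⟨c, B, hrest_eq, hc, hBmap⟩ := List.map_eq_cons_iff.1 hrest2
    subst hrest_eq hu_eq
    have hkn : k < n := hc ▸ c.isLt
    have hAlt : ∀ l ∈ A, l.val < k + 1 := fun l hl => hu l (by simp [hl])
    have hBlt : ∀ l ∈ B, l.val < k + 1 := fun l hl => hu l (by simp [hl])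
    have hBle : ∀ l ∈ B, l.val ≤ c.val := fun l hl => by
      have := hBlt l hl; omega
    set B₀ := B.filter (· ≠ c) with hB₀
    have hB₀lt : ∀ l ∈ B₀, l.val < k := by
      intro l hl
      rw [hB₀, List.mem_filter] at hl
      have h1 := hBlt l hl.1
      have h2 : l ≠ c := by simpa using hl.2
      have : l.val ≠ k := fun hv => h2 (Fin.ext (by rw [hv, hc]))
      omega
    have hchainB : (List.range k).reverse.Sublist (B.map Fin.val) := by
      rw [hBmap]
      exact hrest.trans (List.sublist_append_right q r₂)
    have hchainB₀ : (List.range k).reverse.Sublist (B₀.map Fin.val) := by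
      have hfil : ((List.range k).reverse.filter (fun m => m ≠ c.val)) =
          (List.range k).reverse := by
        apply List.filter_eq_self.2
        intro m hm
        have : m < k := List.mem_range.1 (List.mem_reverse.1 hm)
        simp; omega
      rw [hB₀, filter_ne_map, ← hfil]
      exact List.Sublist.filter _ hchainB
    have ihB := ih B₀ hB₀lt hchainB₀
    have hcB : phiL n (c :: B) = phiL n (c :: B₀) := Dedup c B hBle
    have hcfwd : (c :: fwd n k) = fwd n (k+1) := by
      rw [fwd_succ_of_lt hkn]
      congr 1
      exact Fin.ext hc
    calc phiL n (A ++ c :: B)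
        = phiL n A * phiL n (c :: B) := phiL_append _ _
      _ = phiL n A * phiL n (c :: B₀) := by rw [hcB]
      _ = phiL n A * (gen c * phiL n B₀) := by rw [phiL_cons]
      _ = phiL n A * (gen c * phiL n (fwd n k)) := by rw [ihB]
      _ = phiL n A * phiL n (c :: fwd n k) := by rw [phiL_cons]
      _ = phiL n A * phiL n (fwd n (k+1)) := by rw [hcfwd]
      _ = phiL n (A ++ fwd n (k+1)) := (phiL_append _ _).symm
      _ = phiL n (fwd n (k+1)) := Labs A (k+1) hkn hAlt

/-! ### The counting automaton -/

def stepE (i : Fin n) : Function.End ℕ := fun s => if s = i.val then s + 1 else s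

def run : List (Fin n) → ℕ → ℕ
  | [], s => s
  | a :: w, s => stepE a (run w s)

def FH (n : ℕ) : FreeMonoid (Fin n) →* Function.End ℕ := FreeMonoid.lift stepE

lemma endE_mul_apply (f g : Function.End ℕ) (x : ℕ) : (f * g) x = f (g x) := rfl

lemma FH_apply : ∀ (w : List (Fin n)) (s : ℕ), FH n (FreeMonoid.ofList w) s = run w s := by
  intro w
  induction w with
  | nil => intro s; rfl
  | cons a w ih =>
    intro s
    have : FreeMonoid.ofList (a :: w) = FreeMonoid.of a * FreeMonoid.ofList w := rfl
    rw [this, map_mul, endE_mul_apply]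
    show stepE a (FH n (FreeMonoid.ofList w) s) = run (a :: w) s
    rw [ih]
    rfl

lemma FH_rel {u v : FreeMonoid (Fin n)} (h : Rel n u v) : FH n u = FH n v := by
  rcases h with ⟨i, hu, hv⟩ | ⟨i, j, hij, ⟨hu, hv⟩ | ⟨hu, hv⟩⟩
  · subst hu hv
    funext s
    simp only [map_mul, endE_mul_apply, FH, FreeMonoid.lift_eval_of, stepE]
    split_ifs <;> omega
  · subst hu hv
    have hij' : j.val < i.val := hij
    funext s
    simp only [map_mul, endE_mul_apply, FH, FreeMonoid.lift_eval_of, stepE]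
    split_ifs <;> omega
  · subst hu hv
    have hij' : j.val < i.val := hij
    funext s
    simp only [map_mul, endE_mul_apply, FH, FreeMonoid.lift_eval_of, stepE]
    split_ifs <;> omega

lemma run_le : ∀ (w : List (Fin n)) (s : ℕ), s ≤ run w s := by
  intro w
  induction w with
  | nil => intro s; exact le_rfl
  | cons a w ih =>
    intro s
    have := ih s
    show s ≤ stepE a (run w s)
    unfold stepE
    split_ifs <;> omega

lemma run_append : ∀ (u v : List (Fin n)) (s : ℕ), run (u ++ v) s = run u (run v s) := by
  intro u v s
  induction u with
  | nil => rfl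
  | cons a u ih => show stepE a (run (u ++ v) s) = stepE a (run u (run v s)); rw [ih]

lemma run_zero_of_ne (v : List (Fin n)) (hv : ∀ l ∈ v, l.val ≠ 0) : run v 0 = 0 := by
  induction v with
  | nil => rfl
  | cons a v ih =>
    have h0 : run v 0 = 0 := ih (fun l hl => hv l (List.mem_cons_of_mem _ hl))
    show stepE a (run v 0) = 0
    rw [h0]
    unfold stepE
    have := hv a (List.mem_cons_self)
    split_ifs <;> omega

lemma run_chain : ∀ (w : List (Fin n)) (s : ℕ),
    ((List.range' s (run w s - s)).reverse).Sublist (w.map Fin.val) := by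
  intro w
  induction w with
  | nil => intro s; simp [run]
  | cons a w ih =>
    intro s
    have hle := run_le w s
    show ((List.range' s (stepE a (run w s) - s)).reverse).Sublist (a.val :: w.map Fin.val)
    unfold stepE
    split_ifs with hif
    · have heq : run w s + 1 - s = (run w s - s) + 1 := by omega
      rw [heq, List.range'_concat, List.reverse_append]
      have he : s + 1 * (run w s - s) = a.val := by omega
      simp only [List.reverse_singleton, List.singleton_append, he]
      exact List.Sublist.cons₂ _ (ih s)
    · exact (ih s).trans (List.sublist_cons_self _ _)

lemma run_fwd : ∀ k, k ≤ n → run (fwd n k) 0 = k := by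
  intro k
  induction k with
  | zero => intro _; rfl
  | succ k ih =>
    intro hk
    have hkn : k < n := hk
    rw [fwd_succ_of_lt hkn]
    show stepE ⟨k, hkn⟩ (run (fwd n k) 0) = k + 1
    rw [ih (le_of_lt hk)]
    simp [stepE]

lemma fwd_map : ∀ k, k ≤ n → (fwd n k).map Fin.val = (List.range k).reverse := by
  intro k
  induction k with
  | zero => intro _; rfl
  | succ k ih =>
    intro hk
    have hkn : k < n := hk
    rw [fwd_succ_of_lt hkn, List.map_cons, ih (le_of_lt hk), List.range_succ,
      List.reverse_append]
    rfl

lemma descList_eq : descList n 1 n = fwd n n := by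
  apply List.map_injective_iff.2 Fin.val_injective
  rw [fwd_map n le_rfl]
  unfold descList
  have hfil : (List.finRange n).filter (fun k => decide (1 ≤ k.val + 1 ∧ k.val + 1 ≤ n)) =
      List.finRange n := by
    apply List.filter_eq_self.2
    intro a _
    simp
  rw [hfil, List.map_reverse, (by apply List.ext_getElem <;> simp :
    (List.finRange n).map Fin.val = List.range n)]

end Aux

/-- Zero Cancellation Theorem, part (i): if `y` lies in the submonoid generated by
`a_2, …, a_n` and `x * y = f`, then `x = f`. -/
theorem zero_cancellation_i (n : ℕ) (hn : 1 ≤ n) (x y : K n)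
    (hy : y ∈ upper n) (hxy : x * y = fEl n) : x = fEl n := by
  obtain ⟨xw, hx⟩ := Con.mk'_surjective (c := conGen (Rel n)) x
  set u := FreeMonoid.toList xw with hu
  have hxu : phiL n u = x := by
    rw [← hx]
    unfold phiL
    rw [hu, FreeMonoid.ofList_toList]
    rfl
  have hy' : ∃ v : List (Fin n), (∀ l ∈ v, l.val ≠ 0) ∧ phiL n v = y := by
    refine Submonoid.closure_induction ?_ ?_ ?_ hy
    · rintro a ⟨i, hi, rfl⟩
      refine ⟨[i], ?_, ?_⟩
      · intro l hl
        rw [List.mem_singleton] at hl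
        subst hl
        exact hi
      · show phiL n [i] = gen i
        simp [phiL_cons, phiL_nil]
    · exact ⟨[], by simp, phiL_nil⟩
    · rintro a b _ _ ⟨v₁, h1, rfl⟩ ⟨v₂, h2, rfl⟩
      refine ⟨v₁ ++ v₂, ?_, (phiL_append _ _).symm⟩
      intro l hl
      rcases List.mem_append.1 hl with h | h
      · exact h1 l h
      · exact h2 l h
  obtain ⟨v, hv0, hvy⟩ := hy'
  have hall : phiL n (u ++ v) = fEl n := by
    rw [phiL_append, hxu, hvy, hxy]
  have hcon : conGen (Rel n) (FreeMonoid.ofList (u ++ v))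
      (FreeMonoid.ofList (descList n 1 n)) := (Con.eq _).1 hall
  have hle : conGen (Rel n) ≤ Con.ker (FH n) :=
    Con.conGen_le.2 (fun a b h => (Con.ker_rel _).2 (FH_rel h))
  have hFeq : FH n (FreeMonoid.ofList (u ++ v)) = FH n (FreeMonoid.ofList (descList n 1 n)) :=
    (Con.ker_rel _).1 (hle hcon)
  have hrun : run (u ++ v) 0 = run (descList n 1 n) 0 := by
    rw [← FH_apply, ← FH_apply, hFeq]
  rw [descList_eq, run_fwd n le_rfl, run_append, run_zero_of_ne v hv0] at hrun
  have hchain := run_chain u 0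
  rw [hrun, Nat.sub_zero, ← List.range_eq_range'] at hchain
  have hfinal := suff n u (fun l _ => l.isLt) hchain
  rw [← hxu, hfinal]
  unfold fEl
  rw [descList_eq]
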